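/- Suppose the pair (T, G^{(1)}) is pointwise of weak Lie type. Let z ∈ M with d := ord(z) < ∞ and let N ≥ d. Assume in addition that for every N' ≥ 0: if the closure of T^{(1)}(z) contains M_{N'+1+d}, then for every k ≥ 1 the closure of T^{(k)}(z) contains M_{N'+k+d}. If the closure of T^{(1)}(z) contains M_{N+1}, then the closure of the orbit G^{(N+1+d)}z contains {z} + M_{2N+1+d}; in particular z is order-by-order (2N+d)-determined by G^{(N+1+d)}. -/

import Mathlib

variable {𝕜 M : Type*} [CommRing 𝕜] [AddCommGroup M] [Module 𝕜 M]

/-- `End^{(i)}` : the 𝕜-submodule of endomorphisms shifting the filtration by `i`. -/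
def EndS (Mf : ℕ → Submodule 𝕜 M) (i : ℕ) : Submodule 𝕜 (Module.End 𝕜 M) where
  carrier := {φ | ∀ j : ℕ, ∀ x ∈ Mf j, φ x ∈ Mf (j + i)}
  add_mem' := by
    intro a b ha hb j x hx
    simpa [LinearMap.add_apply] using add_mem (ha j x hx) (hb j x hx)
  zero_mem' := by
    intro j x hx
    simpa using (Mf (j + i)).zero_mem
  smul_mem' := by
    intro c a ha j x hx
    simpa [LinearMap.smul_apply] using Submodule.smul_mem _ c (ha j x hx)

/-- `GL^{(i)}` (for `i ≥ 1`): units `u` such that `u` and `u⁻¹` preserve the filtration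
and `u - 1`, `u⁻¹ - 1` lie in `End^{(i)}`. -/
def GLFil (Mf : ℕ → Submodule 𝕜 M) (i : ℕ) : Set (Module.End 𝕜 M)ˣ :=
  {u | (∀ j : ℕ, ∀ x ∈ Mf j, (u : Module.End 𝕜 M) x ∈ Mf j) ∧
    (∀ j : ℕ, ∀ x ∈ Mf j, ((u⁻¹ : (Module.End 𝕜 M)ˣ) : Module.End 𝕜 M) x ∈ Mf j) ∧
    ((u : Module.End 𝕜 M) - 1) ∈ EndS Mf i ∧
    (((u⁻¹ : (Module.End 𝕜 M)ˣ) : Module.End 𝕜 M) - 1) ∈ EndS Mf i}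

/-- `ord(z) = sup {j : z ∈ M_j} ∈ ℕ ∪ {∞}`. -/
noncomputable def ordM (Mf : ℕ → Submodule 𝕜 M) (z : M) : ℕ∞ :=
  ⨆ j ∈ {j : ℕ | z ∈ Mf j}, (j : ℕ∞)

/-- `ord(φ) = sup {i : φ ∈ End^{(i)}} ∈ ℕ ∪ {∞}`. -/
noncomputable def ordE (Mf : ℕ → Submodule 𝕜 M) (φ : Module.End 𝕜 M) : ℕ∞ :=
  ⨆ i ∈ {i : ℕ | φ ∈ EndS Mf i}, (i : ℕ∞)

/-- Closure of a subset in the filtration topology: `X̄ = ⋂_{j≥1} (X + M_j)`. -/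
def clFil (Mf : ℕ → Submodule 𝕜 M) (X : Set M) : Set M :=
  {m | ∀ j : ℕ, 1 ≤ j → ∃ x ∈ X, m - x ∈ Mf j}

/-- `T^{(i)}(z) = {ξ(z) : ξ ∈ T ∩ End^{(i)}}`. -/
def TOrbit (Mf : ℕ → Submodule 𝕜 M) (T : Submodule 𝕜 (Module.End 𝕜 M)) (i : ℕ)
    (z : M) : Set M :=
  {m | ∃ ξ : Module.End 𝕜 M, ξ ∈ T ∧ ξ ∈ EndS Mf i ∧ ξ z = m}

/-- `G^{(i)}z = {u(z) : u ∈ G ∩ GL^{(i)}}`. -/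
def GOrbit (Mf : ℕ → Submodule 𝕜 M) (G : Subgroup (Module.End 𝕜 M)ˣ) (i : ℕ)
    (z : M) : Set M :=
  {m | ∃ u : (Module.End 𝕜 M)ˣ, u ∈ G ∧ u ∈ GLFil Mf i ∧ (u : Module.End 𝕜 M) z = m}

/-- The pair `(T, G)` is pointwise of Lie type for the index `i`. -/
def IsPointwiseLie (Mf : ℕ → Submodule 𝕜 M) (T : Submodule 𝕜 (Module.End 𝕜 M))
    (G : Subgroup (Module.End 𝕜 M)ˣ) (i : ℕ) : Prop :=
  (∀ ξ : Module.End 𝕜 M, ξ ∈ T → ξ ∈ EndS Mf i → ∀ z : M,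
    ∃ u : (Module.End 𝕜 M)ˣ, u ∈ G ∧ u ∈ GLFil Mf i ∧
      (ordM Mf (ξ z) < ⊤ →
        ordM Mf (((u : Module.End 𝕜 M) - 1 - ξ) z) > ordM Mf (ξ z))) ∧
  (∀ u : (Module.End 𝕜 M)ˣ, u ∈ G → u ∈ GLFil Mf i → ∀ z : M,
    ∃ ξ : Module.End 𝕜 M, ξ ∈ T ∧ ξ ∈ EndS Mf i ∧
      (ordM Mf (((u : Module.End 𝕜 M) - 1) z) < ⊤ →
        ordM Mf (((u : Module.End 𝕜 M) - 1 - ξ) z)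
          > ordM Mf (((u : Module.End 𝕜 M) - 1) z)))

/-- The pair `(T, G)` is pointwise of weak Lie type. -/
def IsPointwiseWeakLie (Mf : ℕ → Submodule 𝕜 M) (T : Submodule 𝕜 (Module.End 𝕜 M))
    (G : Subgroup (Module.End 𝕜 M)ˣ) : Prop :=
  ∀ i : ℕ, 1 ≤ i →
    (∀ ξ : Module.End 𝕜 M, ξ ∈ T → ξ ∈ EndS Mf i → ∀ z : M,
      ∃ u : (Module.End 𝕜 M)ˣ, u ∈ G ∧ u ∈ GLFil Mf i ∧
        (ordM Mf (ξ z) < ⊤ →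
          ordM Mf (((u : Module.End 𝕜 M) - 1 - ξ) z)
            ≥ 2 * ordE Mf ξ + ordM Mf z)) ∧
    (∀ u : (Module.End 𝕜 M)ˣ, u ∈ G → u ∈ GLFil Mf i → ∀ z : M,
      ∃ ξ : Module.End 𝕜 M, ξ ∈ T ∧ ξ ∈ EndS Mf i ∧
        (ordM Mf (((u : Module.End 𝕜 M) - 1) z) < ⊤ →
          ordM Mf (((u : Module.End 𝕜 M) - 1 - ξ) z)
            ≥ 2 * ordE Mf ((u : Module.End 𝕜 M) - 1) + ordM Mf z))

/-!
Newton-type successive approximation, starting from `u = 1`. Suppose `u ∈ G^{(k₀)}` moves `z`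
to within `M_{N+k}` of the target `z + w`. The tangent hypothesis gives `ξ ∈ T^{(k)}` with
`ξ z` equal to the residue modulo `M_{N+k+1}`, and weak Lie type integrates `ξ` to
`g ∈ G^{(k)}` with `(g - 1 - ξ) z ∈ M_{2k+d}`. Then `u * g` is correct modulo `M_{N+k+1}`,
because `(u - 1) ξ z ∈ M_{k₀+k+d}` and `k₀ + d > N`. Iterating gives elements of `G^{(k₀)}`
approximating `z + w` to every order.
-/

section

variable {Mf : ℕ → Submodule 𝕜 M}

lemma mem_of_le_ordM (hMf0 : Mf 0 = ⊤) (hMf : Antitone Mf) {x : M} {c : ℕ}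
    (h : (c : ℕ∞) ≤ ordM Mf x) : x ∈ Mf c := by
  rcases Nat.eq_zero_or_pos c with rfl | hc
  · simp [hMf0]
  have hlt : ((c - 1 : ℕ) : ℕ∞) < ordM Mf x :=
    (ENat.natCast_lt_natCast.mpr (Nat.sub_lt hc one_pos)).trans_le h
  obtain ⟨j, hj, hcj⟩ := lt_biSup_iff.mp hlt
  exact hMf (by have := ENat.natCast_lt_natCast.mp hcj; omega) hj

lemma le_ordE {φ : Module.End 𝕜 M} {i : ℕ} (h : φ ∈ EndS Mf i) : (i : ℕ∞) ≤ ordE Mf φ :=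
  le_biSup (fun j : ℕ => (j : ℕ∞)) h

lemma EndS_antitone (hMf : Antitone Mf) : Antitone (EndS Mf) :=
  fun _ _ h _ hφ j x hx => hMf (Nat.add_le_add_left h j) (hφ j x hx)

lemma GLFil_antitone (hMf : Antitone Mf) : Antitone (GLFil Mf) :=
  fun _ _ h _ ⟨h₁, h₂, h₃, h₄⟩ =>
    ⟨h₁, h₂, EndS_antitone hMf h h₃, EndS_antitone hMf h h₄⟩

lemma one_mem_GLFil (i : ℕ) : (1 : (Module.End 𝕜 M)ˣ) ∈ GLFil Mf i := by
  refine ⟨fun _ _ hx => hx, fun _ _ hx => hx, ?_, ?_⟩ <;> simp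

lemma mul_mem_GLFil {i : ℕ} {u v : (Module.End 𝕜 M)ˣ}
    (hu : u ∈ GLFil Mf i) (hv : v ∈ GLFil Mf i) : u * v ∈ GLFil Mf i := by
  obtain ⟨hu₁, hu₂, hu₃, hu₄⟩ := hu
  obtain ⟨hv₁, hv₂, hv₃, hv₄⟩ := hv
  refine ⟨fun j x hx => hu₁ j _ (hv₁ j x hx), fun j x hx => ?_, fun j x hx => ?_,
    fun j x hx => ?_⟩
  · simpa [mul_inv_rev] using hv₂ j _ (hu₂ j x hx)
  · -- `uv - 1 = (u - 1) v + (v - 1)`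
    simpa [sub_add_sub_cancel] using add_mem (hu₃ j _ (hv₁ j x hx)) (hv₃ j x hx)
  · simpa [mul_inv_rev, sub_add_sub_cancel] using
      add_mem (hv₄ j _ (hu₂ j x hx)) (hu₄ j x hx)

variable {T : Submodule 𝕜 (Module.End 𝕜 M)} {G : Subgroup (Module.End 𝕜 M)ˣ}

lemma IsPointwiseWeakLie.exists_sub_one_sub_mem (hLie : IsPointwiseWeakLie Mf T G)
    (hMf0 : Mf 0 = ⊤) (hMf : Antitone Mf) {k : ℕ} (hk : 1 ≤ k) {ξ : Module.End 𝕜 M}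
    (hξT : ξ ∈ T) (hξ : ξ ∈ EndS Mf k) {z : M} {d : ℕ} (hz : (d : ℕ∞) ≤ ordM Mf z) :
    ∃ g ∈ G, g ∈ GLFil Mf k ∧ ((g : Module.End 𝕜 M) - 1 - ξ) z ∈ Mf (2 * k + d) := by
  obtain ⟨g, hgG, hg, hest⟩ := (hLie k hk).1 ξ hξT hξ z
  rcases eq_top_or_lt_top (ordM Mf (ξ z)) with htop | hlt
  · refine ⟨1, one_mem G, one_mem_GLFil k, ?_⟩
    simpa using mem_of_le_ordM hMf0 hMf (htop ▸ le_top : ((2 * k + d : ℕ) : ℕ∞) ≤ _)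
  · refine ⟨g, hgG, hg, mem_of_le_ordM hMf0 hMf (le_trans ?_ (hest hlt))⟩
    push_cast
    gcongr
    exact le_ordE hξ

lemma sub_mul_apply_eq (y z : M) (u g : (Module.End 𝕜 M)ˣ) (ξ : Module.End 𝕜 M) :
    y - ((u * g : (Module.End 𝕜 M)ˣ) : Module.End 𝕜 M) z =
      (y - (u : Module.End 𝕜 M) z - ξ z) - ((u : Module.End 𝕜 M) - 1) (ξ z) -
        (u : Module.End 𝕜 M) (((g : Module.End 𝕜 M) - 1 - ξ) z) := by
  simp only [Units.val_mul, Module.End.mul_apply, LinearMap.sub_apply, Module.End.one_apply,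
    map_sub]
  abel

lemma exists_sub_apply_mem_succ (hLie : IsPointwiseWeakLie Mf T G) (hMf0 : Mf 0 = ⊤)
    (hMf : Antitone Mf) {z : M} {d : ℕ} (hz : (d : ℕ∞) ≤ ordM Mf z) {N k₀ k : ℕ}
    (hk₀ : k₀ ≤ k) (hN : N + 1 ≤ k₀ + d) (hk : 1 ≤ k)
    (hTk : (Mf (N + k) : Set M) ⊆ clFil Mf (TOrbit Mf T k z))
    {y : M} {u : (Module.End 𝕜 M)ˣ} (huG : u ∈ G) (hu : u ∈ GLFil Mf k₀)
    (hres : y - (u : Module.End 𝕜 M) z ∈ Mf (N + k)) :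
    ∃ u' ∈ G, u' ∈ GLFil Mf k₀ ∧ y - (u' : Module.End 𝕜 M) z ∈ Mf (N + k + 1) := by
  obtain ⟨_, ⟨ξ, hξT, hξ, rfl⟩, hξres⟩ := hTk hres (N + k + 1) (by omega)
  obtain ⟨g, hgG, hg, hgξ⟩ := hLie.exists_sub_one_sub_mem hMf0 hMf hk hξT hξ hz
  refine ⟨u * g, mul_mem huG hgG, mul_mem_GLFil hu (GLFil_antitone hMf hk₀ hg), ?_⟩
  have hξz : ((u : Module.End 𝕜 M) - 1) (ξ z) ∈ Mf (d + k + k₀) :=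
    hu.2.2.1 _ _ (hξ d z (mem_of_le_ordM hMf0 hMf hz))
  have hugξ : (u : Module.End 𝕜 M) (((g : Module.End 𝕜 M) - 1 - ξ) z) ∈ Mf (2 * k + d) :=
    hu.1 _ _ hgξ
  rw [sub_mul_apply_eq y z u g ξ]
  exact sub_mem (sub_mem hξres (hMf (by omega) hξz)) (hMf (by omega) hugξ)

lemma add_mem_clFil_GOrbit (hLie : IsPointwiseWeakLie Mf T G) (hMf0 : Mf 0 = ⊤)
    (hMf : Antitone Mf) {z : M} {d : ℕ} (hz : (d : ℕ∞) ≤ ordM Mf z) {N k₀ : ℕ}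
    (hk₀ : 1 ≤ k₀) (hN : N + 1 ≤ k₀ + d)
    (hTk : ∀ k, 1 ≤ k → (Mf (N + k) : Set M) ⊆ clFil Mf (TOrbit Mf T k z))
    {w : M} (hw : w ∈ Mf (N + k₀)) : z + w ∈ clFil Mf (GOrbit Mf G k₀ z) := by
  have approx : ∀ n, ∃ u ∈ G, u ∈ GLFil Mf k₀ ∧
      z + w - (u : Module.End 𝕜 M) z ∈ Mf (N + (k₀ + n)) := by
    intro n
    induction n with
    | zero => exact ⟨1, one_mem G, one_mem_GLFil k₀, by simpa using hw⟩
    | succ n ih =>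
      obtain ⟨u, huG, hu, hres⟩ := ih
      exact exists_sub_apply_mem_succ (k := k₀ + n) hLie hMf0 hMf hz (by omega) hN
        (by omega) (hTk _ (by omega)) huG hu hres
  intro j _
  obtain ⟨u, huG, hu, hres⟩ := approx j
  exact ⟨_, ⟨u, huG, hu, rfl⟩, hMf (by omega) hres⟩

end

theorem statement12_general (Mf : ℕ → Submodule 𝕜 M) (hMf0 : Mf 0 = ⊤) (hMf : Antitone Mf)
    (G : Subgroup (Module.End 𝕜 M)ˣ)
    (T : Submodule 𝕜 (Module.End 𝕜 M))
    (hLie : IsPointwiseWeakLie Mf T G)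
    (z : M) (d : ℕ) (hz : ordM Mf z = (d : ℕ∞)) (N : ℕ) (hNd : d ≤ N)
    (hprop : ∀ N' : ℕ, (↑(Mf (N' + 1 + d)) ⊆ clFil Mf (TOrbit Mf T 1 z)) →
      ∀ k : ℕ, 1 ≤ k → ↑(Mf (N' + k + d)) ⊆ clFil Mf (TOrbit Mf T k z))
    (hTz : ↑(Mf (N + 1)) ⊆ clFil Mf (TOrbit Mf T 1 z)) :
    ∀ w ∈ Mf (2 * N + 1 + d), z + w ∈ clFil Mf (GOrbit Mf G (N + 1 + d) z) := by
  have hTk : ∀ k, 1 ≤ k → (Mf (N + k) : Set M) ⊆ clFil Mf (TOrbit Mf T k z) := by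
    intro k hk
    have hN' := hprop (N - d) (by rwa [show N - d + 1 + d = N + 1 by omega]) k hk
    rwa [show N - d + k + d = N + k by omega] at hN'
  intro w hw
  exact add_mem_clFil_GOrbit hLie hMf0 hMf hz.ge (by omega) (by omega) hTk
    (by rwa [show N + (N + 1 + d) = 2 * N + 1 + d by omega])

/-- suppose `(T, G^{(1)})` is pointwise of weak Lie type, `z` has finite
order `d`, `N ≥ d`, and the tangent condition propagates along the filtration (if the
closure of `T^{(1)}(z)` contains `M_{N'+1+d}` then for every `k ≥ 1` the closure of
`T^{(k)}(z)` contains `M_{N'+k+d}`). If the closure of `T^{(1)}(z)` contains `M_{N+1}`,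
then the closure of the orbit `G^{(N+1+d)}z` contains `{z} + M_{2N+1+d}`; i.e. `z` is
order-by-order `(2N+d)`-determined by `G^{(N+1+d)}`. -/
theorem statement12 (Mf : ℕ → Submodule 𝕜 M) (hMf0 : Mf 0 = ⊤) (hMf : Antitone Mf)
    (G : Subgroup (Module.End 𝕜 M)ˣ)
    (hG : (G : Set (Module.End 𝕜 M)ˣ) ⊆ GLFil Mf 1)
    (T : Submodule 𝕜 (Module.End 𝕜 M)) (hT : T ≤ EndS Mf 1)
    (hLie : IsPointwiseWeakLie Mf T G)
    (z : M) (d : ℕ) (hz : ordM Mf z = (d : ℕ∞)) (N : ℕ) (hNd : d ≤ N)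
    (hprop : ∀ N' : ℕ, (↑(Mf (N' + 1 + d)) ⊆ clFil Mf (TOrbit Mf T 1 z)) →
      ∀ k : ℕ, 1 ≤ k → ↑(Mf (N' + k + d)) ⊆ clFil Mf (TOrbit Mf T k z))
    (hTz : ↑(Mf (N + 1)) ⊆ clFil Mf (TOrbit Mf T 1 z)) :
    ∀ w ∈ Mf (2 * N + 1 + d), z + w ∈ clFil Mf (GOrbit Mf G (N + 1 + d) z) :=
  statement12_general Mf hMf0 hMf G T hLie z d hz N hNd hprop hTz
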